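/- arXiv:2410.00687 — 2 statements merged into one kernel-verified Lean document; each statement's English description precedes it below -/
import Mathlib

section
/- Let L > 0 and δ̄ ≥ 0, let δ : [0, L] → ℝ be continuous with 0 ≤ δ(ξ) ≤ δ̄ for all ξ ∈ [0, L], and let S = {(ξ, η) ∈ ℝ² : ξ ∈ [0, L], 0 ≤ η ≤ δ(ξ)} be the strip under the graph of δ. If v : ℝ² → ℝ² is continuously differentiable on an open set containing S, then ∫₀^L ‖v(ξ, 0) − v(ξ, δ(ξ))‖² dξ ≤ δ̄ · ∫₀^L ∫₀^{δ(ξ)} ‖∂_η v(ξ, η)‖² dη dξ, where ∂_η v denotes the partial derivative of v with respect to the second coordinate. -/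
/-!
For fixed `ξ`, `v (ξ, δ ξ) - v (ξ, 0)` is the integral of `∂_η v (ξ, ·)` over `[0, δ ξ]`, so
Cauchy–Schwarz bounds its squared norm by `δ ξ ≤ δbar` times `∫₀^{δ ξ} ‖∂_η v (ξ, η)‖² dη`;
integrating in `ξ` gives the claim. The integral comparison needs both sides integrable in `ξ`:
the right side is continuous because, after a Tietze extension off the compact region under the
graph, it is a parametric integral of a continuous function with continuous upper limit.
-/

open MeasureTheory Set

universe u v

theorem sq_integral_le_measureReal_univ_mul_integral_sq {α : Type*} [MeasurableSpace α]
    {μ : Measure α} [IsFiniteMeasure μ] {f : α → ℝ} (hf₀ : 0 ≤ᵐ[μ] f) (hf : MemLp f 2 μ) :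
    (∫ x, f x ∂μ) ^ 2 ≤ μ.real univ * ∫ x, f x ^ 2 ∂μ := by
  have hpq : (2 : ℝ).HolderConjugate 2 := .two_two
  have holder := integral_mul_le_Lp_mul_Lq_of_nonneg hpq hf₀ (ae_of_all _ fun _ => zero_le_one)
    (by simpa using hf) (memLp_const (1 : ℝ))
  simp only [mul_one, Real.rpow_two, one_pow, integral_const, smul_eq_mul] at holder
  have hsq : 0 ≤ ∫ x, f x ^ 2 ∂μ := integral_nonneg fun x => sq_nonneg _
  calc (∫ x, f x ∂μ) ^ 2
      ≤ ((∫ x, f x ^ 2 ∂μ) ^ (1 / 2 : ℝ) * μ.real univ ^ (1 / 2 : ℝ)) ^ 2 :=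
        pow_le_pow_left₀ (integral_nonneg_of_ae hf₀) holder 2
    _ = μ.real univ * ∫ x, f x ^ 2 ∂μ := by
        rw [mul_pow, ← Real.sqrt_eq_rpow, ← Real.sqrt_eq_rpow, Real.sq_sqrt hsq,
          Real.sq_sqrt measureReal_nonneg, mul_comm]

theorem sq_intervalIntegral_le_mul_intervalIntegral_sq {f : ℝ → ℝ} {a b : ℝ} (hab : a ≤ b)
    (hf : ContinuousOn f (Icc a b)) (hf₀ : ∀ x ∈ Icc a b, 0 ≤ f x) :
    (∫ x in a..b, f x) ^ 2 ≤ (b - a) * ∫ x in a..b, f x ^ 2 := by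
  have hsub : Ioc a b ⊆ Icc a b := Ioc_subset_Icc_self
  have hf₀' : 0 ≤ᵐ[volume.restrict (Ioc a b)] f :=
    (ae_restrict_iff' measurableSet_Ioc).mpr (ae_of_all _ fun x hx => hf₀ x (hsub hx))
  have hmeas : AEStronglyMeasurable f (volume.restrict (Ioc a b)) :=
    (hf.mono hsub).aestronglyMeasurable measurableSet_Ioc
  have hL2 : MemLp f 2 (volume.restrict (Ioc a b)) :=
    (memLp_two_iff_integrable_sq hmeas).mpr (((hf.pow 2).integrableOn_Icc).mono_set hsub)
  have := sq_integral_le_measureReal_univ_mul_integral_sq hf₀' hL2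
  rwa [measureReal_restrict_apply_univ, Real.volume_real_Ioc_of_le hab,
    ← intervalIntegral.integral_of_le hab, ← intervalIntegral.integral_of_le hab] at this

theorem norm_sub_sq_le_mul_intervalIntegral_norm_deriv_sq {E : Type*} [NormedAddCommGroup E]
    [NormedSpace ℝ E] [CompleteSpace E] {u u' : ℝ → E} {a b : ℝ} (hab : a ≤ b)
    (hu : ∀ t ∈ Icc a b, HasDerivAt u (u' t) t) (hu' : ContinuousOn u' (Icc a b)) :
    ‖u b - u a‖ ^ 2 ≤ (b - a) * ∫ t in a..b, ‖u' t‖ ^ 2 := by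
  have ftc : ∫ t in a..b, u' t = u b - u a :=
    intervalIntegral.integral_eq_sub_of_hasDerivAt (by rwa [uIcc_of_le hab])
      (hu'.intervalIntegrable_of_Icc hab)
  calc ‖u b - u a‖ ^ 2 ≤ (∫ t in a..b, ‖u' t‖) ^ 2 := by
        rw [← ftc]
        gcongr
        exact intervalIntegral.norm_integral_le_integral_norm hab
    _ ≤ (b - a) * ∫ t in a..b, ‖u' t‖ ^ 2 :=
        sq_intervalIntegral_le_mul_intervalIntegral_sq hab hu'.norm fun _ _ => norm_nonneg _

theorem DifferentiableAt.hasDerivAt_comp_prodMk_right {E : Type*} [NormedAddCommGroup E]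
    [NormedSpace ℝ E] {f : ℝ × ℝ → E} {x y : ℝ} (hf : DifferentiableAt ℝ f (x, y)) :
    HasDerivAt (fun η => f (x, η)) (fderiv ℝ f (x, y) (0, 1)) y :=
  hf.hasFDerivAt.comp_hasDerivAt y ((hasDerivAt_const y x).prodMk (hasDerivAt_id y))

theorem norm_sub_sq_le_mul_intervalIntegral_norm_fderiv_snd_sq {E : Type*}
    [NormedAddCommGroup E] [NormedSpace ℝ E] [CompleteSpace E] {v : ℝ × ℝ → E}
    {U : Set (ℝ × ℝ)} (hU : IsOpen U) (hv : ContDiffOn ℝ 1 v U) {x T : ℝ} (hT : 0 ≤ T)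
    (hxU : ∀ η ∈ Icc 0 T, (x, η) ∈ U) :
    ‖v (x, 0) - v (x, T)‖ ^ 2 ≤ T * ∫ η in 0..T, ‖fderiv ℝ v (x, η) (0, 1)‖ ^ 2 := by
  have hderiv : ∀ η ∈ Icc 0 T,
      HasDerivAt (fun η => v (x, η)) (fderiv ℝ v (x, η) (0, 1)) η := fun η hη =>
    ((hv.differentiableOn one_ne_zero).differentiableAt (hU.mem_nhds (hxU η hη)))
      |>.hasDerivAt_comp_prodMk_right
  have hcont : ContinuousOn (fun η => fderiv ℝ v (x, η) (0, 1)) (Icc 0 T) :=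
    ((hv.continuousOn_fderiv_of_isOpen hU le_rfl).comp (by fun_prop) hxU).clm_apply
      continuousOn_const
  simpa [norm_sub_rev] using norm_sub_sq_le_mul_intervalIntegral_norm_deriv_sq hT hderiv hcont

def regionUnderGraph (δ : ℝ → ℝ) (a b : ℝ) : Set (ℝ × ℝ) :=
  {p | p.1 ∈ Icc a b ∧ p.2 ∈ Icc 0 (δ p.1)}

theorem isCompact_regionUnderGraph {δ : ℝ → ℝ} {a b : ℝ} (hδ : ContinuousOn δ (Icc a b)) :
    IsCompact (regionUnderGraph δ a b) := by
  obtain ⟨M, hM⟩ := isCompact_Icc.exists_bound_of_continuousOn hδ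
  have hclosed : IsClosed (regionUnderGraph δ a b) := by
    have := (hδ.comp continuousOn_fst fun p hp => hp.1).sub continuousOn_snd
      |>.preimage_isClosed_of_isClosed (isClosed_Icc.prod (isClosed_Ici (a := (0 : ℝ))))
        (isClosed_Ici (a := (0 : ℝ)))
    convert this using 1
    ext p
    simp [regionUnderGraph, and_assoc]
  refine ((isCompact_Icc (a := a) (b := b)).prod (isCompact_Icc (a := 0) (b := M)))
    |>.of_isClosed_subset hclosed ?_
  rintro p ⟨hp₁, hp₂⟩
  exact ⟨hp₁, hp₂.1, hp₂.2.trans ((le_abs_self _).trans (hM _ hp₁))⟩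

theorem ContinuousOn.exists_continuous_eqOn {X : Type u} {Y : Type v} [TopologicalSpace X]
    [NormalSpace X] [TopologicalSpace Y] [TietzeExtension.{u, v} Y] {f : X → Y} {s : Set X}
    (hs : IsClosed s) (hf : ContinuousOn f s) : ∃ g : X → Y, Continuous g ∧ EqOn g f s := by
  obtain ⟨g, hg⟩ := ContinuousMap.exists_restrict_eq hs ⟨s.domRestrict f, hf.domRestrict⟩
  exact ⟨g, g.continuous, fun x hx => congr($hg ⟨x, hx⟩)⟩

theorem continuousOn_intervalIntegral_regionUnderGraph {δ : ℝ → ℝ} {a b : ℝ}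
    {g : ℝ × ℝ → ℝ} (hδ : ContinuousOn δ (Icc a b)) (hδ₀ : ∀ ξ ∈ Icc a b, 0 ≤ δ ξ)
    (hg : ContinuousOn g (regionUnderGraph δ a b)) :
    ContinuousOn (fun ξ => ∫ η in 0..δ ξ, g (ξ, η)) (Icc a b) := by
  obtain ⟨δ', hδ'c, hδ'⟩ := hδ.exists_continuous_eqOn isClosed_Icc
  obtain ⟨g', hg'c, hg'⟩ := hg.exists_continuous_eqOn (isCompact_regionUnderGraph hδ).isClosed
  refine (intervalIntegral.continuous_parametric_intervalIntegral_of_continuous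
    (f := fun ξ η => g' (ξ, η)) (μ := volume) (a₀ := 0) hg'c hδ'c).continuousOn.congr
    fun ξ hξ => ?_
  simp only [hδ' hξ]
  refine intervalIntegral.integral_congr fun η hη => (hg' ?_).symm
  exact ⟨hξ, by rwa [uIcc_of_le (hδ₀ ξ hξ)] at hη⟩

theorem strip_lemma_general
    (L δbar : ℝ) (hL : 0 < L)
    (δ : ℝ → ℝ) (hδcont : ContinuousOn δ (Set.Icc 0 L))
    (hδnonneg : ∀ ξ ∈ Set.Icc (0:ℝ) L, 0 ≤ δ ξ)
    (hδle : ∀ ξ ∈ Set.Icc (0:ℝ) L, δ ξ ≤ δbar)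
    (U : Set (ℝ × ℝ)) (hU : IsOpen U)
    (hSU : ∀ ξ ∈ Set.Icc (0:ℝ) L, ∀ η ∈ Set.Icc (0:ℝ) (δ ξ), (ξ, η) ∈ U)
    (v : ℝ × ℝ → EuclideanSpace ℝ (Fin 2)) (hv : ContDiffOn ℝ 1 v U) :
    ∫ ξ in (0:ℝ)..L, ‖v (ξ, 0) - v (ξ, δ ξ)‖ ^ 2 ≤
      δbar * ∫ ξ in (0:ℝ)..L, ∫ η in (0:ℝ)..(δ ξ), ‖fderiv ℝ v (ξ, η) (0, 1)‖ ^ 2 := by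
  have hSU' : regionUnderGraph δ 0 L ⊆ U := fun p hp => hSU p.1 hp.1 p.2 hp.2
  have hpointwise : ∀ ξ ∈ Icc 0 L, ‖v (ξ, 0) - v (ξ, δ ξ)‖ ^ 2 ≤
      δbar * ∫ η in (0:ℝ)..(δ ξ), ‖fderiv ℝ v (ξ, η) (0, 1)‖ ^ 2 := fun ξ hξ =>
    (norm_sub_sq_le_mul_intervalIntegral_norm_fderiv_snd_sq hU hv (hδnonneg ξ hξ) (hSU ξ hξ)).trans
      (mul_le_mul_of_nonneg_right (hδle ξ hξ)
        (intervalIntegral.integral_nonneg (hδnonneg ξ hξ) fun _ _ => sq_nonneg _))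
  have hlhs : ContinuousOn (fun ξ => ‖v (ξ, 0) - v (ξ, δ ξ)‖ ^ 2) (Icc 0 L) :=
    ((hv.continuousOn.comp (by fun_prop) fun ξ hξ => hSU ξ hξ 0 ⟨le_rfl, hδnonneg ξ hξ⟩).sub
      (hv.continuousOn.comp (continuousOn_id.prodMk hδcont) fun ξ hξ =>
        hSU ξ hξ _ ⟨hδnonneg ξ hξ, le_rfl⟩)).norm.pow 2
  have hrhs : ContinuousOn (fun ξ => ∫ η in (0:ℝ)..(δ ξ), ‖fderiv ℝ v (ξ, η) (0, 1)‖ ^ 2)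
      (Icc 0 L) :=
    continuousOn_intervalIntegral_regionUnderGraph hδcont hδnonneg
      (g := fun p => ‖fderiv ℝ v p (0, 1)‖ ^ 2)
      (((hv.continuousOn_fderiv_of_isOpen hU le_rfl).mono hSU').clm_apply continuousOn_const
        |>.norm.pow 2)
  calc ∫ ξ in (0:ℝ)..L, ‖v (ξ, 0) - v (ξ, δ ξ)‖ ^ 2
      ≤ ∫ ξ in (0:ℝ)..L, δbar * ∫ η in (0:ℝ)..(δ ξ), ‖fderiv ℝ v (ξ, η) (0, 1)‖ ^ 2 :=
        intervalIntegral.integral_mono_on hL.le (hlhs.intervalIntegrable_of_Icc hL.le)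
          ((continuousOn_const.mul hrhs).intervalIntegrable_of_Icc hL.le) hpointwise
    _ = _ := intervalIntegral.integral_const_mul _ _

/-- Strip estimate between the straight edge `η = 0` and the curved graph `η = δ(ξ)`:
`∫₀^L ‖v(ξ,0) − v(ξ,δ(ξ))‖² dξ ≤ δ̄ · ∫₀^L ∫₀^{δ(ξ)} ‖∂_η v(ξ,η)‖² dη dξ`. -/
theorem strip_lemma
    (L δbar : ℝ) (hL : 0 < L) (hδbar : 0 ≤ δbar)
    (δ : ℝ → ℝ) (hδcont : ContinuousOn δ (Set.Icc 0 L))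
    (hδnonneg : ∀ ξ ∈ Set.Icc (0:ℝ) L, 0 ≤ δ ξ)
    (hδle : ∀ ξ ∈ Set.Icc (0:ℝ) L, δ ξ ≤ δbar)
    (U : Set (ℝ × ℝ)) (hU : IsOpen U)
    (hSU : ∀ ξ ∈ Set.Icc (0:ℝ) L, ∀ η ∈ Set.Icc (0:ℝ) (δ ξ), (ξ, η) ∈ U)
    (v : ℝ × ℝ → EuclideanSpace ℝ (Fin 2)) (hv : ContDiffOn ℝ 1 v U) :
    ∫ ξ in (0:ℝ)..L, ‖v (ξ, 0) - v (ξ, δ ξ)‖ ^ 2 ≤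
      δbar * ∫ ξ in (0:ℝ)..L, ∫ η in (0:ℝ)..(δ ξ), ‖fderiv ℝ v (ξ, η) (0, 1)‖ ^ 2 :=
  strip_lemma_general L δbar hL δ hδcont hδnonneg hδle U hU hSU v hv
end

section
/- Let L > 0 and δ̄ ≥ 0, let δ : [0, L] → ℝ be continuous with 0 ≤ δ(ξ) ≤ δ̄ for all ξ ∈ [0, L], and let S = {(ξ, η) ∈ ℝ² : ξ ∈ [0, L], 0 ≤ η ≤ δ(ξ)}. If v : ℝ² → ℝ is continuously differentiable on an open set containing S, then ∫₀^L ∫₀^{δ(ξ)} v(ξ, η)² dη dξ ≤ 2 δ̄ · ∫₀^L v(ξ, δ(ξ))² dξ + 2 δ̄² · ∫₀^L ∫₀^{δ(ξ)} (∂_η v(ξ, η))² dη dξ, where ∂_η v denotes the partial derivative of v with respect to the second coordinate. -/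
/-!
On each vertical fiber `η ↦ v (ξ, η)`, `0 ≤ η ≤ δ ξ`, write `v (ξ, η) = v (ξ, δ ξ) - ∫_η^{δ ξ} ∂_η v`
and bound the square by `(x + y)² ≤ 2x² + 2y²` and Cauchy–Schwarz; integrating over the fiber gives
`∫₀^{δ ξ} v² ≤ 2 δ ξ · v(ξ, δ ξ)² + 2 (δ ξ)² ∫₀^{δ ξ} (∂_η v)²`, and `δ ξ ≤ δ̄`. Integrating in `ξ`
needs the fiber integrals to be continuous in `ξ`, which follows from Tietze's extension theorem
and continuity of parametric integrals.
-/

open Set intervalIntegral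
open MeasureTheory (volume)

theorem sq_intervalIntegral_le {a b : ℝ} (hab : a ≤ b) {g : ℝ → ℝ}
    (hg : IntervalIntegrable g volume a b)
    (hg2 : IntervalIntegrable (fun t => g t ^ 2) volume a b) :
    (∫ t in a..b, g t) ^ 2 ≤ (b - a) * ∫ t in a..b, g t ^ 2 := by
  rcases hab.eq_or_lt with rfl | hlt
  · simp
  set I := ∫ t in a..b, g t
  set A := ∫ t in a..b, g t ^ 2
  have hexpand : ∫ t in a..b, ((b - a) * g t - I) ^ 2 = (b - a) ^ 2 * A - (b - a) * I ^ 2 := by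
    have hsq : ∀ t, ((b - a) * g t - I) ^ 2
        = (b - a) ^ 2 * g t ^ 2 - 2 * (b - a) * I * g t + I ^ 2 := fun t => by ring
    simp_rw [hsq]
    rw [integral_add ((hg2.const_mul _).sub (hg.const_mul _)) intervalIntegrable_const,
      integral_sub (hg2.const_mul _) (hg.const_mul _), integral_const_mul, integral_const_mul,
      integral_const, smul_eq_mul]
    ring
  have hnonneg : 0 ≤ ∫ t in a..b, ((b - a) * g t - I) ^ 2 :=
    integral_nonneg hab fun t _ => sq_nonneg _
  rw [hexpand] at hnonneg
  nlinarith [sub_pos.mpr hlt]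

theorem sq_le_of_hasDerivAt {a b : ℝ} {g g' : ℝ → ℝ}
    (hg : ∀ t ∈ Icc a b, HasDerivAt g (g' t) t) (hg' : ContinuousOn g' (Icc a b))
    {x : ℝ} (hx : x ∈ Icc a b) :
    g x ^ 2 ≤ 2 * g b ^ 2 + 2 * (b - a) * ∫ t in a..b, g' t ^ 2 := by
  have hsub : Icc x b ⊆ Icc a b := Icc_subset_Icc_left hx.1
  have hg'x : ContinuousOn g' (Icc x b) := hg'.mono hsub
  have hftc : ∫ t in x..b, g' t = g b - g x :=
    integral_eq_sub_of_hasDerivAt (fun t ht => hg t (hsub (uIcc_of_le hx.2 ▸ ht)))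
      (hg'x.intervalIntegrable_of_Icc hx.2)
  have hcs : (∫ t in x..b, g' t) ^ 2 ≤ (b - x) * ∫ t in x..b, g' t ^ 2 :=
    sq_intervalIntegral_le hx.2 (hg'x.intervalIntegrable_of_Icc hx.2)
      ((hg'x.pow 2).intervalIntegrable_of_Icc hx.2)
  have htail : ∫ t in x..b, g' t ^ 2 ≤ ∫ t in a..b, g' t ^ 2 :=
    integral_mono_interval hx.1 hx.2 le_rfl (Filter.Eventually.of_forall fun t => sq_nonneg _)
      ((hg'.pow 2).intervalIntegrable_of_Icc (hx.1.trans hx.2))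
  have htail_nonneg : 0 ≤ ∫ t in x..b, g' t ^ 2 := integral_nonneg hx.2 fun t _ => sq_nonneg _
  have hlen : b - x ≤ b - a := by linarith [hx.1]
  calc g x ^ 2 = (g b - ∫ t in x..b, g' t) ^ 2 := by rw [hftc]; ring
    _ ≤ 2 * g b ^ 2 + 2 * (∫ t in x..b, g' t) ^ 2 := by
        nlinarith [sq_nonneg (g b + ∫ t in x..b, g' t)]
    _ ≤ 2 * g b ^ 2 + 2 * (b - a) * ∫ t in a..b, g' t ^ 2 := by
        nlinarith [mul_le_mul hlen htail htail_nonneg (by linarith [hx.2])]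

theorem integral_sq_le_of_hasDerivAt {a b : ℝ} (hab : a ≤ b) {g g' : ℝ → ℝ}
    (hg : ∀ t ∈ Icc a b, HasDerivAt g (g' t) t) (hg' : ContinuousOn g' (Icc a b)) :
    ∫ t in a..b, g t ^ 2 ≤ 2 * (b - a) * g b ^ 2 + 2 * (b - a) ^ 2 * ∫ t in a..b, g' t ^ 2 := by
  have hgc : ContinuousOn g (Icc a b) := fun t ht => (hg t ht).continuousAt.continuousWithinAt
  calc ∫ t in a..b, g t ^ 2
      ≤ ∫ _ in a..b, (2 * g b ^ 2 + 2 * (b - a) * ∫ t in a..b, g' t ^ 2) :=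
        integral_mono_on hab ((hgc.pow 2).intervalIntegrable_of_Icc hab) intervalIntegrable_const
          fun x hx => sq_le_of_hasDerivAt hg hg' hx
    _ = 2 * (b - a) * g b ^ 2 + 2 * (b - a) ^ 2 * ∫ t in a..b, g' t ^ 2 := by
        rw [integral_const, smul_eq_mul]; ring

theorem integral_sq_fiber_le {U : Set (ℝ × ℝ)} (hU : IsOpen U) {v : ℝ × ℝ → ℝ}
    (hv : ContDiffOn ℝ 1 v U) {ξ d δbar : ℝ} (hd : 0 ≤ d) (hdδ : d ≤ δbar)
    (hfiber : ∀ η ∈ Icc 0 d, (ξ, η) ∈ U) :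
    ∫ η in (0:ℝ)..d, v (ξ, η) ^ 2 ≤
      2 * δbar * v (ξ, d) ^ 2 + 2 * δbar ^ 2 * ∫ η in (0:ℝ)..d, fderiv ℝ v (ξ, η) (0, 1) ^ 2 := by
  have hderiv : ∀ η ∈ Icc 0 d, HasDerivAt (fun η => v (ξ, η)) (fderiv ℝ v (ξ, η) (0, 1)) η :=
    fun η hη => ((hv.differentiableOn one_ne_zero _ (hfiber η hη)).differentiableAt
      (hU.mem_nhds (hfiber η hη))).hasFDerivAt.comp_hasDerivAt η
      ((hasDerivAt_const η ξ).prodMk (hasDerivAt_id η))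
  have hcont : ContinuousOn (fun η => fderiv ℝ v (ξ, η) (0, 1)) (Icc 0 d) :=
    ((hv.continuousOn_fderiv_of_isOpen hU le_rfl).clm_apply continuousOn_const).comp
      (continuous_const.prodMk continuous_id).continuousOn hfiber
  have hint : 0 ≤ ∫ η in (0:ℝ)..d, fderiv ℝ v (ξ, η) (0, 1) ^ 2 :=
    integral_nonneg hd fun _ _ => sq_nonneg _
  calc _ ≤ 2 * (d - 0) * v (ξ, d) ^ 2 + 2 * (d - 0) ^ 2 * _ :=
        integral_sq_le_of_hasDerivAt hd hderiv hcont
    _ ≤ _ := by rw [sub_zero]; gcongr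

theorem continuous_parametric_intervalIntegral_of_continuousOn {X : Type*} [MetricSpace X]
    {f : X × ℝ → ℝ} {a₀ : ℝ} {s : X → ℝ} (hs : Continuous s)
    (hf : ContinuousOn f {p | p.2 ∈ uIcc a₀ (s p.1)}) :
    Continuous fun x => ∫ t in a₀..s x, f (x, t) := by
  set K := {p : X × ℝ | p.2 ∈ uIcc a₀ (s p.1)}
  have hK : IsClosed K :=
    (isClosed_le (continuous_const.min (hs.comp continuous_fst)) continuous_snd).inter
      (isClosed_le continuous_snd (continuous_const.max (hs.comp continuous_fst)))
  obtain ⟨F, hF⟩ := ContinuousMap.exists_restrict_eq hK ⟨K.domRestrict f, hf.domRestrict⟩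
  have hFf : ∀ p ∈ K, F p = f p := fun p hp => ContinuousMap.congr_fun hF ⟨p, hp⟩
  have hcongr : (fun x => ∫ t in a₀..s x, F (x, t)) = fun x => ∫ t in a₀..s x, f (x, t) :=
    funext fun x => integral_congr fun t ht => hFf (x, t) ht
  exact hcongr ▸ continuous_parametric_intervalIntegral_of_continuous
    (f := fun x t => F (x, t)) F.continuous hs

theorem continuousOn_parametric_intervalIntegral_of_continuousOn {a b a₀ : ℝ} (hab : a ≤ b)
    {f : ℝ × ℝ → ℝ} {s : ℝ → ℝ} (hs : ContinuousOn s (Icc a b))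
    (hf : ContinuousOn f {p | p.1 ∈ Icc a b ∧ p.2 ∈ uIcc a₀ (s p.1)}) :
    ContinuousOn (fun x => ∫ t in a₀..s x, f (x, t)) (Icc a b) := by
  set c : ℝ → ℝ := fun x => projIcc a b hab x
  have hc : Continuous c := continuous_subtype_val.comp continuous_projIcc
  have hcs : Continuous (s ∘ c) := hs.comp_continuous hc fun x => (projIcc a b hab x).2
  have hfc : ContinuousOn (fun p : ℝ × ℝ => f (c p.1, p.2)) {p | p.2 ∈ uIcc a₀ (s (c p.1))} :=
    hf.comp (hc.comp continuous_fst |>.prodMk continuous_snd).continuousOn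
      fun p hp => ⟨(projIcc a b hab p.1).2, hp⟩
  refine (continuous_parametric_intervalIntegral_of_continuousOn hcs hfc).continuousOn.congr
    fun x hx => ?_
  simp only [c, projIcc_of_mem hab hx, Function.comp]

theorem bramble_king_inequality_general
    (L δbar : ℝ) (hL : 0 < L)
    (δ : ℝ → ℝ) (hδcont : ContinuousOn δ (Set.Icc 0 L))
    (hδnonneg : ∀ ξ ∈ Set.Icc (0:ℝ) L, 0 ≤ δ ξ)
    (hδle : ∀ ξ ∈ Set.Icc (0:ℝ) L, δ ξ ≤ δbar)
    (U : Set (ℝ × ℝ)) (hU : IsOpen U)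
    (hSU : ∀ ξ ∈ Set.Icc (0:ℝ) L, ∀ η ∈ Set.Icc (0:ℝ) (δ ξ), (ξ, η) ∈ U)
    (v : ℝ × ℝ → ℝ) (hv : ContDiffOn ℝ 1 v U) :
    ∫ ξ in (0:ℝ)..L, ∫ η in (0:ℝ)..(δ ξ), (v (ξ, η)) ^ 2 ≤
      2 * δbar * (∫ ξ in (0:ℝ)..L, (v (ξ, δ ξ)) ^ 2) +
        2 * δbar ^ 2 * ∫ ξ in (0:ℝ)..L, ∫ η in (0:ℝ)..(δ ξ),
          (fderiv ℝ v (ξ, η) (0, 1)) ^ 2 := by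
  have hregion : {p : ℝ × ℝ | p.1 ∈ Icc 0 L ∧ p.2 ∈ uIcc 0 (δ p.1)} ⊆ U := fun p ⟨hp₁, hp₂⟩ =>
    hSU p.1 hp₁ p.2 (uIcc_of_le (hδnonneg p.1 hp₁) ▸ hp₂)
  have hvc : ContinuousOn v U := hv.continuousOn
  have hvη : ContinuousOn (fun p => fderiv ℝ v p (0, 1)) U :=
    (hv.continuousOn_fderiv_of_isOpen hU le_rfl).clm_apply continuousOn_const
  have hF₁ : ContinuousOn (fun ξ => ∫ η in (0:ℝ)..δ ξ, v (ξ, η) ^ 2) (Icc 0 L) :=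
    continuousOn_parametric_intervalIntegral_of_continuousOn hL.le hδcont
      ((hvc.mono hregion).pow 2)
  have hF₂ : ContinuousOn (fun ξ => ∫ η in (0:ℝ)..δ ξ, fderiv ℝ v (ξ, η) (0, 1) ^ 2) (Icc 0 L) :=
    continuousOn_parametric_intervalIntegral_of_continuousOn hL.le hδcont
      ((hvη.mono hregion).pow 2)
  have hB : ContinuousOn (fun ξ => v (ξ, δ ξ) ^ 2) (Icc 0 L) :=
    (hvc.comp (continuousOn_id.prodMk hδcont) fun ξ hξ =>
      hSU ξ hξ (δ ξ) ⟨hδnonneg ξ hξ, le_rfl⟩).pow 2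
  have hBi := (hB.intervalIntegrable_of_Icc (μ := volume) hL.le).const_mul (2 * δbar)
  have hF₂i := (hF₂.intervalIntegrable_of_Icc (μ := volume) hL.le).const_mul (2 * δbar ^ 2)
  calc _ ≤ ∫ ξ in (0:ℝ)..L, (2 * δbar * v (ξ, δ ξ) ^ 2 +
        2 * δbar ^ 2 * ∫ η in (0:ℝ)..δ ξ, fderiv ℝ v (ξ, η) (0, 1) ^ 2) :=
        integral_mono_on hL.le (hF₁.intervalIntegrable_of_Icc hL.le) (hBi.add hF₂i)
          fun ξ hξ => integral_sq_fiber_le hU hv (hδnonneg ξ hξ) (hδle ξ hξ) (hSU ξ hξ)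
    _ = _ := by rw [integral_add hBi hF₂i, integral_const_mul, integral_const_mul]

/-- Bramble–King type inequality in local coordinates:
`∫∫_S v² ≤ 2δ̄ ∫₀^L v(ξ,δ(ξ))² dξ + 2δ̄² ∫∫_S (∂_η v)²`. -/
theorem bramble_king_inequality
    (L δbar : ℝ) (hL : 0 < L) (hδbar : 0 ≤ δbar)
    (δ : ℝ → ℝ) (hδcont : ContinuousOn δ (Set.Icc 0 L))
    (hδnonneg : ∀ ξ ∈ Set.Icc (0:ℝ) L, 0 ≤ δ ξ)
    (hδle : ∀ ξ ∈ Set.Icc (0:ℝ) L, δ ξ ≤ δbar)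
    (U : Set (ℝ × ℝ)) (hU : IsOpen U)
    (hSU : ∀ ξ ∈ Set.Icc (0:ℝ) L, ∀ η ∈ Set.Icc (0:ℝ) (δ ξ), (ξ, η) ∈ U)
    (v : ℝ × ℝ → ℝ) (hv : ContDiffOn ℝ 1 v U) :
    ∫ ξ in (0:ℝ)..L, ∫ η in (0:ℝ)..(δ ξ), (v (ξ, η)) ^ 2 ≤
      2 * δbar * (∫ ξ in (0:ℝ)..L, (v (ξ, δ ξ)) ^ 2) +
        2 * δbar ^ 2 * ∫ ξ in (0:ℝ)..L, ∫ η in (0:ℝ)..(δ ξ),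
          (fderiv ℝ v (ξ, η) (0, 1)) ^ 2 :=
  bramble_king_inequality_general L δbar hL δ hδcont hδnonneg hδle U hU hSU v hv
end
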